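/- The maps α and β define a free action of the Klein four-group ℤ/2 × ℤ/2 on S⁶ × S⁵. Precisely: α ∘ α = id, β ∘ β = id, and α ∘ β = β ∘ α on S⁶ × S⁵, and none of the three maps α, β, α ∘ β has a fixed point in S⁶ × S⁵. -/

import Mathlib

open scoped BigOperators

/-- `S⁶ × S⁵`: the set of pairs `(x, y)` with `x ∈ ℝ⁷`, `y ∈ ℝ⁶`, `‖x‖ = 1`, `‖y‖ = 1`
(written via sums of squares). -/
def sphereProd : Set ((Fin 7 → ℝ) × (Fin 6 → ℝ)) :=
  {p | (∑ i, p.1 i ^ 2) = 1 ∧ (∑ j, p.2 j ^ 2) = 1}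

/-- `α(x₁,…,x₇, y₁,…,y₆) = (−x₁,…,−x₇, −y₁, y₂,…,y₆)`. -/
def alphaMap (p : (Fin 7 → ℝ) × (Fin 6 → ℝ)) : (Fin 7 → ℝ) × (Fin 6 → ℝ) :=
  (fun i => -p.1 i, fun j => if j = 0 then -p.2 j else p.2 j)

/-- `β(x₁,…,x₇, y₁,…,y₆) = (x₁,…,x₇, −y₁,…,−y₆)`. -/
def betaMap (p : (Fin 7 → ℝ) × (Fin 6 → ℝ)) : (Fin 7 → ℝ) × (Fin 6 → ℝ) :=
  (p.1, fun j => -p.2 j)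

/-! Each of `α`, `β`, `α ∘ β` negates an entire factor (`α` and `α ∘ β` the first, `β` the
second) and a unit vector is not its own negative, so none of them has a fixed point. -/

theorem neg_ne_self_of_sum_sq_eq_one {ι : Type*} [Fintype ι] {v : ι → ℝ}
    (hv : ∑ i, v i ^ 2 = 1) : -v ≠ v := by
  rw [Ne, neg_eq_self]
  rintro rfl
  simp at hv

theorem alphaMap_involutive : Function.Involutive alphaMap := fun p => by
  ext j <;> simp +contextual [alphaMap]

theorem betaMap_involutive : Function.Involutive betaMap := fun p => by
  simp [betaMap]

theorem alphaMap_commute_betaMap : Function.Commute alphaMap betaMap := fun p => by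
  ext j <;> simp [alphaMap, betaMap, neg_ite]

theorem mapsTo_alphaMap_sphereProd : Set.MapsTo alphaMap sphereProd sphereProd := by
  intro p hp
  simpa [sphereProd, alphaMap, apply_ite (· ^ 2)] using hp

theorem mapsTo_betaMap_sphereProd : Set.MapsTo betaMap sphereProd sphereProd := by
  intro p hp
  simpa [sphereProd, betaMap] using hp

theorem alphaMap_ne_self {p : (Fin 7 → ℝ) × (Fin 6 → ℝ)} (hp : p ∈ sphereProd) : alphaMap p ≠ p :=
  fun h => neg_ne_self_of_sum_sq_eq_one hp.1 (congrArg Prod.fst h)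

theorem betaMap_ne_self {p : (Fin 7 → ℝ) × (Fin 6 → ℝ)} (hp : p ∈ sphereProd) : betaMap p ≠ p :=
  fun h => neg_ne_self_of_sum_sq_eq_one hp.2 (congrArg Prod.snd h)

theorem alphaMap_betaMap_ne_self {p : (Fin 7 → ℝ) × (Fin 6 → ℝ)} (hp : p ∈ sphereProd) :
    alphaMap (betaMap p) ≠ p :=
  fun h => neg_ne_self_of_sum_sq_eq_one hp.1 (congrArg Prod.fst h)

theorem klein_four_free_action_on_S6_x_S5 :
    Set.MapsTo alphaMap sphereProd sphereProd ∧
    Set.MapsTo betaMap sphereProd sphereProd ∧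
    (∀ p ∈ sphereProd, alphaMap (alphaMap p) = p) ∧
    (∀ p ∈ sphereProd, betaMap (betaMap p) = p) ∧
    (∀ p ∈ sphereProd, alphaMap (betaMap p) = betaMap (alphaMap p)) ∧
    (∀ p ∈ sphereProd, alphaMap p ≠ p) ∧
    (∀ p ∈ sphereProd, betaMap p ≠ p) ∧
    (∀ p ∈ sphereProd, alphaMap (betaMap p) ≠ p) :=
  ⟨mapsTo_alphaMap_sphereProd, mapsTo_betaMap_sphereProd,
    fun p _ => alphaMap_involutive p, fun p _ => betaMap_involutive p,
    fun p _ => alphaMap_commute_betaMap p,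
    fun _ => alphaMap_ne_self, fun _ => betaMap_ne_self, fun _ => alphaMap_betaMap_ne_self⟩
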